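/- arXiv:2205.13984 — 2 statements merged into one kernel-verified Lean document; each statement's English description precedes it below -/
import Mathlib

section
/- Correspondence between Poincaré and 2D hyperboloid distributions: for a real 2×2 symmetric positive-definite matrix θ = [[a,b],[b,c]], let θ_L := (a+c, a−c, 2b). Then (i) for all such θ, θ′: [θ_L,θ_L] = 4·det θ, [θ′_L,θ′_L] = 4·det θ′, and [θ_L,θ′_L] = 2·(det θ)·tr(θ′θ⁻¹); and (ii) for every convex f : (0,∞) → ℝ with f(1) = 0, the f-divergence between the 2D hyperboloid distributions with parameters θ_L and θ′_L equals the f-divergence between the Poincaré distributions with parameters θ and θ′: D_f[p_{θ_L} : p_{θ′_L}] = D_f[p_θ : p_{θ′}]. -/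
open MeasureTheory Matrix

/-- The Poincaré density on the upper half-plane, as a density on `ℝ × ℝ`
(vanishing for `y ≤ 0`), indexed by a 2×2 symmetric positive-definite matrix. -/
noncomputable def poincareDensity (θ : Matrix (Fin 2) (Fin 2) ℝ) (z : ℝ × ℝ) : ℝ :=
  if 0 < z.2 then
    Real.sqrt θ.det * Real.exp (2 * Real.sqrt θ.det) / Real.pi *
      Real.exp (-(θ 0 0 * (z.1 ^ 2 + z.2 ^ 2) + 2 * θ 0 1 * z.1 + θ 1 1) / z.2) / z.2 ^ 2
  else 0

/-- The `f`-divergence between two densities on the upper half-plane. -/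
noncomputable def fDivH (f : ℝ → ℝ) (p q : ℝ × ℝ → ℝ) : ℝ :=
  ∫ z in {w : ℝ × ℝ | 0 < w.2}, p z * f (q z / p z)

/-- The Minkowski inner product on ℝ³ (as ℝ × ℝ × ℝ). -/
noncomputable def mink3 (θ η : ℝ × ℝ × ℝ) : ℝ :=
  θ.1 * η.1 - θ.2.1 * η.2.1 - θ.2.2 * η.2.2

/-- The Minkowski norm |θ| = √(θ₀²−θ₁²−θ₂²). -/
noncomputable def mnorm (θ : ℝ × ℝ × ℝ) : ℝ :=
  Real.sqrt (θ.1 ^ 2 - θ.2.1 ^ 2 - θ.2.2 ^ 2)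

/-- The parameter space condition θ₀ > √(θ₁²+θ₂²). -/
def inHypParam (θ : ℝ × ℝ × ℝ) : Prop :=
  Real.sqrt (θ.2.1 ^ 2 + θ.2.2 ^ 2) < θ.1

/-- The density of the 2D hyperboloid distribution on ℝ². -/
noncomputable def hypDensity2 (θ : ℝ × ℝ × ℝ) (x : ℝ × ℝ) : ℝ :=
  mnorm θ * Real.exp (mnorm θ) / (2 * Real.pi) *
    Real.exp (-(θ.1 * Real.sqrt (1 + x.1 ^ 2 + x.2 ^ 2) - θ.2.1 * x.1 - θ.2.2 * x.2)) /
      Real.sqrt (1 + x.1 ^ 2 + x.2 ^ 2)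

/-- The f-divergence between two densities on ℝ². -/
noncomputable def fDivL (f : ℝ → ℝ) (p q : ℝ × ℝ → ℝ) : ℝ :=
  ∫ z : ℝ × ℝ, p z * f (q z / p z)

/-- The correspondence θ = [[a,b],[b,c]] ↦ θ_L = (a+c, a−c, 2b). -/
noncomputable def toHyp (θ : Matrix (Fin 2) (Fin 2) ℝ) : ℝ × ℝ × ℝ :=
  (θ 0 0 + θ 1 1, θ 0 0 - θ 1 1, 2 * θ 0 1)

/-!
Both parts rest on the identity `[θ_L, θ'_L] = 2 tr(θ' adj θ)` for symmetric `θ, θ'`, which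
gives (i) through `θ adj θ = det θ • 1` and `θ⁻¹ = (det θ)⁻¹ • adj θ`; in particular
`|θ_L| = 2 √(det θ)`.

For (ii), `T (x, y) = ((1 - x² - y²) / (2y), -x/y)` is the isometry from the upper half-plane
onto the hyperboloid `{(√(1 + |w|²), w)}`, written in the coordinates `w ∈ ℝ²`. It pulls the
Minkowski product with `θ_L` back to `(a(x² + y²) + 2bx + c) / y`, and since
`√(1 + |T z|²) = (x² + y² + 1) / (2y)` and `|det DT| = (x² + y² + 1) / (2y³)`, the hyperboloid
density times this Jacobian is the Poincaré density. An `f`-divergence is invariant under such a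
change of variables: both densities acquire the same Jacobian factor, which cancels in their
ratio.
-/

open Set

theorem HasFDerivAt.div {𝕜 E : Type*} [NontriviallyNormedField 𝕜] [NormedAddCommGroup E]
    [NormedSpace 𝕜 E] {u v : E → 𝕜} {u' v' : E →L[𝕜] 𝕜} {x : E} (hu : HasFDerivAt u u' x)
    (hv : HasFDerivAt v v' x) (hx : v x ≠ 0) :
    HasFDerivAt (fun y => u y / v y) ((v x ^ 2)⁻¹ • (v x • u' - u x • v')) x := by
  simp only [div_eq_mul_inv]
  refine (hu.mul ((hasDerivAt_inv hx).comp_hasFDerivAt x hv)).congr_fderiv ?_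
  ext y
  simp only [Function.comp_apply, _root_.add_apply, _root_.sub_apply, _root_.smul_apply,
    smul_eq_mul]
  field_simp
  ring

theorem integral_image_fDiv_eq_of_pullback {E : Type*} [NormedAddCommGroup E] [NormedSpace ℝ E]
    [FiniteDimensional ℝ E] [MeasurableSpace E] [BorelSpace E] (μ : Measure E)
    [μ.IsAddHaarMeasure] {s : Set E} {T : E → E} {T' : E → E →L[ℝ] E} (hs : MeasurableSet s)
    (hT' : ∀ x ∈ s, HasFDerivWithinAt T (T' x) s x) (hT : InjOn T s) (f : ℝ → ℝ)
    {p q p' q' : E → ℝ} (hp : ∀ x ∈ s, |(T' x).det| * p (T x) = p' x)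
    (hq : ∀ x ∈ s, |(T' x).det| * q (T x) = q' x) :
    ∫ y in T '' s, p y * f (q y / p y) ∂μ = ∫ x in s, p' x * f (q' x / p' x) ∂μ := by
  rw [integral_image_eq_integral_abs_det_fderiv_smul μ hs hT' hT]
  refine setIntegral_congr_fun hs fun x hx => ?_
  rw [← hp x hx, ← hq x hx, smul_eq_mul]
  rcases eq_or_ne |(T' x).det| 0 with hJ | hJ
  · simp [hJ]
  · rw [mul_div_mul_left _ _ hJ, mul_assoc]

theorem Matrix.PosDef.isSymm {n : Type*} {θ : Matrix n n ℝ} (hθ : θ.PosDef) : θ.IsSymm :=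
  isHermitian_iff_isSymm.mp hθ.isHermitian

section Minkowski

variable {θ θ' : Matrix (Fin 2) (Fin 2) ℝ}

theorem mnorm_eq_sqrt_mink3 (η : ℝ × ℝ × ℝ) : mnorm η = √(mink3 η η) := by
  simp only [mnorm, mink3, sq]

theorem mink3_toHyp (hθ : θ.IsSymm) (hθ' : θ'.IsSymm) :
    mink3 (toHyp θ) (toHyp θ') = 2 * (θ' * θ.adjugate).trace := by
  rw [mink3, toHyp, toHyp, trace_fin_two, adjugate_fin_two]
  simp only [mul_apply, Fin.sum_univ_two, of_apply, cons_val', cons_val_zero, cons_val_one,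
    empty_val', cons_val_fin_one]
  rw [hθ.apply 0 1, hθ'.apply 0 1]
  ring

theorem mink3_toHyp_self (hθ : θ.IsSymm) : mink3 (toHyp θ) (toHyp θ) = 4 * θ.det := by
  rw [mink3_toHyp hθ hθ, mul_adjugate, trace_smul, trace_one, Fintype.card_fin, smul_eq_mul]
  ring

theorem mink3_toHyp_eq_det_mul_trace (hθ : θ.IsSymm) (hθ' : θ'.IsSymm) (hdet : θ.det ≠ 0) :
    mink3 (toHyp θ) (toHyp θ') = 2 * θ.det * (θ' * θ⁻¹).trace := by
  rw [mink3_toHyp hθ hθ', inv_def, mul_smul_comm, trace_smul, Ring.inverse_eq_inv, smul_eq_mul]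
  field_simp

theorem mnorm_toHyp (hθ : θ.IsSymm) : mnorm (toHyp θ) = 2 * √θ.det := by
  rw [mnorm_eq_sqrt_mink3, mink3_toHyp_self hθ, Real.sqrt_mul zero_le_four,
    show (4 : ℝ) = 2 ^ 2 by norm_num, Real.sqrt_sq zero_le_two]

end Minkowski

noncomputable def halfPlaneToHyperboloid (z : ℝ × ℝ) : ℝ × ℝ :=
  ((1 - z.1 ^ 2 - z.2 ^ 2) / (2 * z.2), -z.1 / z.2)

noncomputable def hyperboloidToHalfPlane (w : ℝ × ℝ) : ℝ × ℝ :=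
  (-w.2 / (√(1 + w.1 ^ 2 + w.2 ^ 2) + w.1), 1 / (√(1 + w.1 ^ 2 + w.2 ^ 2) + w.1))

noncomputable def fderivHalfPlaneToHyperboloid (z : ℝ × ℝ) : (ℝ × ℝ) →L[ℝ] (ℝ × ℝ) :=
  LinearMap.toContinuousLinearMap (toLin (Module.Basis.finTwoProd ℝ) (Module.Basis.finTwoProd ℝ)
    !![-z.1 / z.2, (z.1 ^ 2 - z.2 ^ 2 - 1) / (2 * z.2 ^ 2); -(1 / z.2), z.1 / z.2 ^ 2])

section HalfPlaneToHyperboloid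

variable {z : ℝ × ℝ}

theorem hasFDerivAt_halfPlaneToHyperboloid (hz : 0 < z.2) :
    HasFDerivAt halfPlaneToHyperboloid (fderivHalfPlaneToHyperboloid z) z := by
  have hfst : HasFDerivAt (fun p : ℝ × ℝ => p.1) (ContinuousLinearMap.fst ℝ ℝ ℝ) z :=
    hasFDerivAt_fst
  have hsnd : HasFDerivAt (fun p : ℝ × ℝ => p.2) (ContinuousLinearMap.snd ℝ ℝ ℝ) z :=
    hasFDerivAt_snd
  have hx := (((hasFDerivAt_const 1 z).sub (hfst.pow 2)).sub (hsnd.pow 2)).div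
    (hsnd.const_mul 2) (by positivity)
  have hy := hfst.neg.div hsnd hz.ne'
  rw [fderivHalfPlaneToHyperboloid, toLin_finTwoProd_toContinuousLinearMap]
  refine (hx.prodMk hy).congr_fderiv ?_
  ext <;>
  simp only [Pi.sub_apply, Pi.neg_apply, ContinuousLinearMap.comp_apply,
    ContinuousLinearMap.inl_apply, ContinuousLinearMap.inr_apply, ContinuousLinearMap.prod_apply,
    ContinuousLinearMap.coe_fst', ContinuousLinearMap.coe_snd', _root_.add_apply,
    _root_.sub_apply, _root_.neg_apply, _root_.smul_apply, _root_.zero_apply,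
    smul_eq_mul, nsmul_eq_mul] <;>
  field_simp <;>
  ring

theorem abs_det_fderivHalfPlaneToHyperboloid (hz : 0 < z.2) :
    |(fderivHalfPlaneToHyperboloid z).det| = (z.1 ^ 2 + z.2 ^ 2 + 1) / (2 * z.2 ^ 3) := by
  have hdet : -z.1 / z.2 * (z.1 / z.2 ^ 2) - (z.1 ^ 2 - z.2 ^ 2 - 1) / (2 * z.2 ^ 2) * -(1 / z.2) =
      -((z.1 ^ 2 + z.2 ^ 2 + 1) / (2 * z.2 ^ 3)) := by
    field_simp
    ring
  rw [fderivHalfPlaneToHyperboloid, ContinuousLinearMap.det, LinearMap.coe_toContinuousLinearMap,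
    LinearMap.det_toLin, det_fin_two_of, hdet, abs_neg, abs_of_pos (by positivity)]

theorem sqrt_one_add_halfPlaneToHyperboloid (hz : 0 < z.2) :
    √(1 + (halfPlaneToHyperboloid z).1 ^ 2 + (halfPlaneToHyperboloid z).2 ^ 2) =
      (z.1 ^ 2 + z.2 ^ 2 + 1) / (2 * z.2) := by
  rw [Real.sqrt_eq_iff_eq_sq (by positivity) (by positivity), halfPlaneToHyperboloid]
  field_simp
  ring

theorem hyperboloidToHalfPlane_halfPlaneToHyperboloid (hz : 0 < z.2) :
    hyperboloidToHalfPlane (halfPlaneToHyperboloid z) = z := by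
  have hsum : √(1 + (halfPlaneToHyperboloid z).1 ^ 2 + (halfPlaneToHyperboloid z).2 ^ 2) +
      (halfPlaneToHyperboloid z).1 = 1 / z.2 := by
    rw [sqrt_one_add_halfPlaneToHyperboloid hz, halfPlaneToHyperboloid]
    field_simp
    ring
  rw [hyperboloidToHalfPlane, hsum, halfPlaneToHyperboloid]
  ext <;> field_simp

end HalfPlaneToHyperboloid

section HyperboloidToHalfPlane

variable (w : ℝ × ℝ)

theorem sqrt_one_add_sq_add_fst_pos : 0 < √(1 + w.1 ^ 2 + w.2 ^ 2) + w.1 := by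
  have h : |w.1| < √(1 + w.1 ^ 2 + w.2 ^ 2) :=
    (Real.lt_sqrt (abs_nonneg _)).2 (by rw [sq_abs]; nlinarith [sq_nonneg w.2])
  linarith [neg_abs_le w.1]

theorem hyperboloidToHalfPlane_snd_pos : 0 < (hyperboloidToHalfPlane w).2 :=
  one_div_pos.2 (sqrt_one_add_sq_add_fst_pos w)

theorem halfPlaneToHyperboloid_hyperboloidToHalfPlane :
    halfPlaneToHyperboloid (hyperboloidToHalfPlane w) = w := by
  have hsq : √(1 + w.1 ^ 2 + w.2 ^ 2) ^ 2 = 1 + w.1 ^ 2 + w.2 ^ 2 := Real.sq_sqrt (by positivity)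
  have hpos := (sqrt_one_add_sq_add_fst_pos w).ne'
  simp only [halfPlaneToHyperboloid, hyperboloidToHalfPlane]
  ext
  · field_simp
    linear_combination hsq
  · field_simp

end HyperboloidToHalfPlane

theorem injOn_halfPlaneToHyperboloid : InjOn halfPlaneToHyperboloid {z : ℝ × ℝ | 0 < z.2} :=
  LeftInvOn.injOn fun _ hz => hyperboloidToHalfPlane_halfPlaneToHyperboloid hz

theorem image_halfPlaneToHyperboloid : halfPlaneToHyperboloid '' {z : ℝ × ℝ | 0 < z.2} = univ :=
  eq_univ_of_forall fun w =>
    ⟨_, hyperboloidToHalfPlane_snd_pos w, halfPlaneToHyperboloid_hyperboloidToHalfPlane w⟩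

theorem abs_det_mul_hypDensity2_toHyp {θ : Matrix (Fin 2) (Fin 2) ℝ} (hθ : θ.IsSymm)
    {z : ℝ × ℝ} (hz : 0 < z.2) :
    |(fderivHalfPlaneToHyperboloid z).det| * hypDensity2 (toHyp θ) (halfPlaneToHyperboloid z) =
      poincareDensity θ z := by
  have hexponent : (toHyp θ).1 * ((z.1 ^ 2 + z.2 ^ 2 + 1) / (2 * z.2)) -
      (toHyp θ).2.1 * (halfPlaneToHyperboloid z).1 - (toHyp θ).2.2 * (halfPlaneToHyperboloid z).2 =
      (θ 0 0 * (z.1 ^ 2 + z.2 ^ 2) + 2 * θ 0 1 * z.1 + θ 1 1) / z.2 := by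
    simp only [toHyp, halfPlaneToHyperboloid]
    field_simp
    ring
  rw [poincareDensity, if_pos hz, hypDensity2, sqrt_one_add_halfPlaneToHyperboloid hz,
    mnorm_toHyp hθ, hexponent, abs_det_fderivHalfPlaneToHyperboloid hz, neg_div]
  field_simp

/-- correspondence between Poincaré and 2D hyperboloid distributions:
(i) the Minkowski products of the transformed parameters are the canonical terms of the
Poincaré parameters, and (ii) f-divergences agree. -/
theorem poincare_hyperboloid_correspondence :
    (∀ θ θ' : Matrix (Fin 2) (Fin 2) ℝ, θ.PosDef → θ'.PosDef →
      mink3 (toHyp θ) (toHyp θ) = 4 * θ.det ∧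
      mink3 (toHyp θ') (toHyp θ') = 4 * θ'.det ∧
      mink3 (toHyp θ) (toHyp θ') = 2 * θ.det * (θ' * θ⁻¹).trace) ∧
    (∀ θ θ' : Matrix (Fin 2) (Fin 2) ℝ, θ.PosDef → θ'.PosDef →
      ∀ f : ℝ → ℝ, ConvexOn ℝ (Set.Ioi 0) f → f 1 = 0 →
      fDivL f (hypDensity2 (toHyp θ)) (hypDensity2 (toHyp θ')) =
        fDivH f (poincareDensity θ) (poincareDensity θ')) := by
  refine ⟨fun θ θ' hθ hθ' => ⟨mink3_toHyp_self hθ.isSymm, mink3_toHyp_self hθ'.isSymm,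
    mink3_toHyp_eq_det_mul_trace hθ.isSymm hθ'.isSymm hθ.det_pos.ne'⟩, ?_⟩
  intro θ θ' hθ hθ' f _ _
  have hs : MeasurableSet {z : ℝ × ℝ | 0 < z.2} := measurableSet_lt measurable_const measurable_snd
  rw [fDivL, fDivH, ← setIntegral_univ, ← image_halfPlaneToHyperboloid]
  exact integral_image_fDiv_eq_of_pullback volume hs
    (fun _ hz => (hasFDerivAt_halfPlaneToHyperboloid hz).hasFDerivWithinAt)
    injOn_halfPlaneToHyperboloid f (fun _ hz => abs_det_mul_hypDensity2_toHyp hθ.isSymm hz)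
    (fun _ hz => abs_det_mul_hypDensity2_toHyp hθ'.isSymm hz)
end

section
/- Fix d ≥ 2 and let θ ∈ ℝ^{d+1} lie on the upper unit hyperboloid sheet, i.e. θ₀ = √(1 + θ₁² + ⋯ + θ_d²). Then the hyperboloid distributions P_{tθ} converge weakly, as t → +∞, to the Dirac measure δ_{(θ₁,…,θ_d)} at the point (θ₁,…,θ_d) ∈ ℝ^d; equivalently, for every bounded continuous function φ : ℝ^d → ℝ, ∫ φ dP_{tθ} → φ(θ₁,…,θ_d) as t → +∞. -/
open MeasureTheory

/-- The Minkowski inner product on ℝ^{d+1}: [x,y] = x₀y₀ − x₁y₁ − ⋯ − x_d y_d. -/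
noncomputable def mink {d : ℕ} (x y : Fin (d + 1) → ℝ) : ℝ :=
  x 0 * y 0 - ∑ i : Fin d, x i.succ * y i.succ

/-- The parameter space Θ = {θ : θ₀ > √(θ₁² + ⋯ + θ_d²)}. -/
def hypParam (d : ℕ) : Set (Fin (d + 1) → ℝ) :=
  {θ | Real.sqrt (∑ i : Fin d, θ i.succ ^ 2) < θ 0}

/-- The upper unit hyperboloid sheet L^d. -/
def hypSheet (d : ℕ) : Set (Fin (d + 1) → ℝ) :=
  {x | mink x x = 1 ∧ 0 < x 0}

/-- SO₀(1,d): determinant-one matrices preserving the Minkowski inner product and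
mapping the upper hyperboloid sheet onto itself. -/
def SOplus (d : ℕ) : Set (Matrix (Fin (d + 1)) (Fin (d + 1)) ℝ) :=
  {A | A.det = 1 ∧ (∀ x y, mink (A.mulVec x) (A.mulVec y) = mink x y) ∧
    A.mulVec '' hypSheet d = hypSheet d}

/-- The lift x̃ = (√(1+‖x‖²), x) of a point x ∈ ℝ^d to the hyperboloid. -/
noncomputable def hypLift {d : ℕ} (x : Fin d → ℝ) : Fin (d + 1) → ℝ :=
  Fin.cons (Real.sqrt (1 + ∑ i, x i ^ 2)) x

/-- The unnormalized density of the hyperboloid distribution. -/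
noncomputable def hypKernel {d : ℕ} (θ : Fin (d + 1) → ℝ) (x : Fin d → ℝ) : ℝ :=
  Real.exp (-mink θ (hypLift x)) / Real.sqrt (1 + ∑ i, x i ^ 2)

/-- The normalizing constant of the hyperboloid distribution. -/
noncomputable def hypZ (d : ℕ) (θ : Fin (d + 1) → ℝ) : ℝ :=
  ∫ x : Fin d → ℝ, hypKernel θ x

/-- The density of the hyperboloid distribution P_θ on ℝ^d. -/
noncomputable def hypDensity (d : ℕ) (θ : Fin (d + 1) → ℝ) (x : Fin d → ℝ) : ℝ :=
  hypKernel θ x / hypZ d θ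

/-- The hyperboloid distribution P_θ as a Borel measure on ℝ^d. -/
noncomputable def hypMeasure (d : ℕ) (θ : Fin (d + 1) → ℝ) : Measure (Fin d → ℝ) :=
  volume.withDensity fun x => ENNReal.ofReal (hypDensity d θ x)

/-!
In the chart `x ↦ x̃`, `P_θ` is the exponential tilt of the invariant measure `dx / x̃₀` by
`-[θ, x̃]`, so `P_{tθ}` is its tilt by `-t [θ, x̃]`. For `θ` on the sheet, `[θ, x̃]` is the
hyperbolic cosine of the distance from `θ` to `x̃`: it is `≥ 1` with equality only at
`x = (θ₁, …, θ_d)`, and it grows linearly at infinity. Hence outside any neighbourhood of that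
point `[θ, x̃] ≥ 1 + η`, while `[θ, x̃] < 1 + η / 2` on a set of positive measure, and Laplace's
method shows that the mass of `P_{tθ}` outside the neighbourhood is `O(exp (-t η / 2))`.
-/

open Filter Topology Real

section Concentration

variable {X : Type*} [TopologicalSpace X]

theorem exists_pos_add_le_of_notMem {L : X → ℝ} {x₀ : X} (hL : Continuous L)
    (hcoer : Tendsto L (cocompact X) atTop) (hmin : ∀ x ≠ x₀, L x₀ < L x)
    {U : Set X} (hU : IsOpen U) (hx₀ : x₀ ∈ U) :
    ∃ η > 0, ∀ x ∉ U, L x₀ + η ≤ L x := by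
  obtain ⟨C, hC, hCsub⟩ := mem_cocompact.1 (hcoer.eventually_gt_atTop (L x₀ + 1))
  have hK : IsCompact (Uᶜ ∩ {x | L x ≤ L x₀ + 1}) :=
    hC.of_isClosed_subset (hU.isClosed_compl.inter (isClosed_le hL continuous_const))
      fun x hx => by_contra fun hxC => (hCsub hxC).not_ge (show L x ≤ L x₀ + 1 from hx.2)
  obtain ⟨a, ha, haK⟩ := hK.exists_forall_le' hL.continuousOn
    fun x hx => hmin x (ne_of_mem_of_not_mem hx₀ hx.1).symm
  refine ⟨min 1 (a - L x₀), lt_min one_pos (sub_pos.2 ha), fun x hx => ?_⟩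
  by_cases hxL : L x ≤ L x₀ + 1
  · linarith [haK x ⟨hx, hxL⟩, min_le_right 1 (a - L x₀)]
  · linarith [min_le_left 1 (a - L x₀)]

variable [MeasurableSpace X] [OpensMeasurableSpace X]

theorem abs_integral_sub_apply_le {P : Measure X} [IsProbabilityMeasure P]
    (φ : BoundedContinuousFunction X ℝ) (x₀ : X) {ε : ℝ} (hε : 0 < ε) :
    |∫ x, φ x ∂P - φ x₀| ≤ ε + 2 * ‖φ‖ * P.real {x | ε ≤ dist (φ x) (φ x₀)} := by
  set S := {x | ε ≤ dist (φ x) (φ x₀)}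
  have hS : MeasurableSet S := (isClosed_le continuous_const (by fun_prop)).measurableSet
  have hbound : ∀ x, ‖φ x - φ x₀‖ ≤ ε + 2 * ‖φ‖ * S.indicator (fun _ => (1 : ℝ)) x := by
    intro x
    by_cases hx : x ∈ S
    · simp only [Set.indicator_of_mem hx, mul_one]
      linarith [φ.dist_le_two_norm x x₀, (dist_eq_norm (φ x) (φ x₀)).symm, hε]
    · simp only [Set.indicator_of_notMem hx, mul_zero, add_zero]
      rw [← dist_eq_norm]; exact (not_le.1 hx).le
  have hind : Integrable (fun x => 2 * ‖φ‖ * S.indicator (fun _ => (1 : ℝ)) x) P :=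
    ((integrable_const 1).indicator hS).const_mul _
  calc |∫ x, φ x ∂P - φ x₀| = ‖∫ x, (φ x - φ x₀) ∂P‖ := by
        rw [integral_sub (φ.integrable P) (integrable_const _), integral_const, probReal_univ,
          one_smul, Real.norm_eq_abs]
    _ ≤ ∫ x, (ε + 2 * ‖φ‖ * S.indicator (fun _ => (1 : ℝ)) x) ∂P :=
        norm_integral_le_of_norm_le ((integrable_const ε).add hind) (ae_of_all _ hbound)
    _ = ε + 2 * ‖φ‖ * P.real S := by
        rw [integral_add (integrable_const ε) hind, integral_const, probReal_univ, one_smul,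
          integral_const_mul, integral_indicator_const _ hS, smul_eq_mul, mul_one]

theorem tendsto_integral_of_tendsto_measureReal_compl {ι : Type*} {l : Filter ι}
    {P : ι → Measure X} (hP : ∀ᶠ i in l, IsProbabilityMeasure (P i)) {x₀ : X}
    (hconc : ∀ U, IsOpen U → x₀ ∈ U → Tendsto (fun i => (P i).real Uᶜ) l (𝓝 0))
    (φ : BoundedContinuousFunction X ℝ) :
    Tendsto (fun i => ∫ x, φ x ∂P i) l (𝓝 (φ x₀)) := by
  refine Metric.tendsto_nhds.2 fun ε hε => ?_
  have hU : IsOpen {x | dist (φ x) (φ x₀) < ε / 2} := isOpen_lt (by fun_prop) continuous_const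
  have hlim := ((hconc _ hU (by simpa using half_pos hε)).const_mul (2 * ‖φ‖)).const_add (ε / 2)
  rw [mul_zero, add_zero] at hlim
  filter_upwards [hP, hlim.eventually_lt_const (half_lt_self hε)] with i hPi hi
  rw [Real.dist_eq]
  refine (abs_integral_sub_apply_le φ x₀ (half_pos hε)).trans_lt ?_
  simpa only [Set.compl_ofPred, not_lt] using hi

end Concentration

theorem exp_neg_mul_eq (t y : ℝ) : exp (-(t * y)) = exp (-((t - 1) * y)) * exp (-y) := by
  rw [← exp_add]; ring_nf

section Laplace

variable {X : Type*} [MeasurableSpace X] {ν : Measure X} {L : X → ℝ}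

theorem integrable_exp_neg_mul_of_le (hL : Measurable L) {m : ℝ} (hm : ∀ x, m ≤ L x)
    (hint : Integrable (fun x => exp (-L x)) ν) {t : ℝ} (ht : 1 ≤ t) :
    Integrable (fun x => exp (-(t * L x))) ν := by
  refine (hint.const_mul (exp (-((t - 1) * m)))).mono' (by fun_prop) (ae_of_all _ fun x => ?_)
  rw [norm_of_nonneg (exp_pos _).le, exp_neg_mul_eq]
  gcongr
  exact hm x

theorem measureReal_tilted [SFinite ν] (f : X → ℝ) (S : Set X) :
    (ν.tilted f).real S = (∫ x in S, exp (f x) ∂ν) / ∫ x, exp (f x) ∂ν := by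
  rw [measureReal_def, tilted_apply_eq_ofReal_integral, integral_div,
    ENNReal.toReal_ofReal (div_nonneg (integral_nonneg fun _ => (exp_pos _).le)
      (integral_nonneg fun _ => (exp_pos _).le))]

/-- Tilting further by `-(t - 1) L` costs at least `exp (-(t - 1) b)` on `S` and at most
`exp (-(t - 1) a)` on `V`. -/
theorem measureReal_tilted_neg_mul_le [SFinite ν] (hL : Measurable L) {m a b t : ℝ}
    (hm : ∀ x, m ≤ L x) (hint : Integrable (fun x => exp (-L x)) ν) (ht : 1 ≤ t)
    {S V : Set X} (hS : MeasurableSet S) (hV : MeasurableSet V) (hSb : ∀ x ∈ S, b ≤ L x)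
    (hVa : ∀ x ∈ V, L x ≤ a) (hVpos : 0 < ∫ x in V, exp (-L x) ∂ν) :
    (ν.tilted fun x => -(t * L x)).real S ≤
      (∫ x, exp (-L x) ∂ν) / (∫ x in V, exp (-L x) ∂ν) * exp (-((t - 1) * (b - a))) := by
  have hint_t := integrable_exp_neg_mul_of_le hL hm hint ht
  have hnum : ∫ x in S, exp (-(t * L x)) ∂ν ≤ exp (-((t - 1) * b)) * ∫ x, exp (-L x) ∂ν := by
    calc ∫ x in S, exp (-(t * L x)) ∂ν ≤ ∫ x in S, exp (-((t - 1) * b)) * exp (-L x) ∂ν := by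
          refine setIntegral_mono_on hint_t.integrableOn (hint.const_mul _).integrableOn hS
            fun x hx => ?_
          rw [exp_neg_mul_eq]
          gcongr
          exact hSb x hx
      _ ≤ _ := by
          rw [integral_const_mul]
          exact mul_le_mul_of_nonneg_left
            (setIntegral_le_integral hint (ae_of_all _ fun _ => (exp_pos _).le)) (exp_pos _).le
  have hden : exp (-((t - 1) * a)) * ∫ x in V, exp (-L x) ∂ν ≤ ∫ x, exp (-(t * L x)) ∂ν := by
    calc exp (-((t - 1) * a)) * ∫ x in V, exp (-L x) ∂ν
        = ∫ x in V, exp (-((t - 1) * a)) * exp (-L x) ∂ν := (integral_const_mul _ _).symm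
      _ ≤ ∫ x in V, exp (-(t * L x)) ∂ν := by
          refine setIntegral_mono_on (hint.const_mul _).integrableOn hint_t.integrableOn hV
            fun x hx => ?_
          rw [exp_neg_mul_eq t]
          gcongr
          exact hVa x hx
      _ ≤ _ := setIntegral_le_integral hint_t (ae_of_all _ fun _ => (exp_pos _).le)
  have hZ : 0 < ∫ x, exp (-(t * L x)) ∂ν := (mul_pos (exp_pos _) hVpos).trans_le hden
  rw [measureReal_tilted, div_le_iff₀ hZ]
  calc ∫ x in S, exp (-(t * L x)) ∂ν ≤ exp (-((t - 1) * b)) * ∫ x, exp (-L x) ∂ν := hnum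
    _ = (∫ x, exp (-L x) ∂ν) / (∫ x in V, exp (-L x) ∂ν) * exp (-((t - 1) * (b - a))) *
          (exp (-((t - 1) * a)) * ∫ x in V, exp (-L x) ∂ν) := by
        rw [show -((t - 1) * b) = -((t - 1) * (b - a)) + -((t - 1) * a) by ring, exp_add]
        field_simp
    _ ≤ _ := by gcongr

variable [TopologicalSpace X] [OpensMeasurableSpace X]

theorem tendsto_integral_tilted_neg_mul [SFinite ν] [ν.IsOpenPosMeasure] {x₀ : X}
    (hL : Continuous L) (hcoer : Tendsto L (cocompact X) atTop) (hmin : ∀ x ≠ x₀, L x₀ < L x)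
    (hint : Integrable (fun x => exp (-L x)) ν) (φ : BoundedContinuousFunction X ℝ) :
    Tendsto (fun t => ∫ x, φ x ∂ν.tilted fun x => -(t * L x)) atTop (𝓝 (φ x₀)) := by
  have : Nonempty X := ⟨x₀⟩
  have hm : ∀ x, L x₀ ≤ L x := fun x => by
    rcases eq_or_ne x x₀ with rfl | hx
    exacts [le_rfl, (hmin x hx).le]
  refine tendsto_integral_of_tendsto_measureReal_compl ?_ (fun U hU hx₀ => ?_) φ
  · filter_upwards [eventually_ge_atTop 1] with t ht
    exact isProbabilityMeasure_tilted (integrable_exp_neg_mul_of_le hL.measurable hm hint ht)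
  obtain ⟨η, hη, hgap⟩ := exists_pos_add_le_of_notMem hL hcoer hmin hU hx₀
  set V := {x | L x < L x₀ + η / 2}
  have hV : IsOpen V := isOpen_lt hL continuous_const
  have hVpos : 0 < ∫ x in V, exp (-L x) ∂ν := by
    have : NeZero (ν.restrict V) := ⟨by
      rw [Ne, Measure.restrict_eq_zero]
      exact (hV.measure_pos ν ⟨x₀, by simpa [V] using hη⟩).ne'⟩
    exact integral_exp_pos hint.integrableOn
  have hdecay : Tendsto (fun t => (∫ x, exp (-L x) ∂ν) / (∫ x in V, exp (-L x) ∂ν) *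
      exp (-((t - 1) * (L x₀ + η - (L x₀ + η / 2))))) atTop (𝓝 0) := by
    have hlin : Tendsto (fun t : ℝ => (t - 1) * (L x₀ + η - (L x₀ + η / 2))) atTop atTop :=
      (tendsto_atTop_add_const_right _ (-1) tendsto_id).atTop_mul_const (by linarith)
    simpa using (tendsto_exp_atBot.comp (tendsto_neg_atTop_atBot.comp hlin)).const_mul _
  refine tendsto_of_tendsto_of_tendsto_of_le_of_le' tendsto_const_nhds hdecay
    (Eventually.of_forall fun t => measureReal_nonneg) ?_
  filter_upwards [eventually_ge_atTop 1] with t ht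
  exact measureReal_tilted_neg_mul_le hL.measurable hm hint ht hU.isClosed_compl.measurableSet
    hV.measurableSet hgap (fun x hx => le_of_lt hx) hVpos

end Laplace

theorem integrable_exp_neg_mul_norm {E : Type*} [NormedAddCommGroup E] [NormedSpace ℝ E]
    [FiniteDimensional ℝ E] [MeasurableSpace E] [BorelSpace E] (μ : Measure E)
    [μ.IsAddHaarMeasure] {c : ℝ} (hc : 0 < c) :
    Integrable (fun x : E => exp (-(c * ‖x‖))) μ := by
  set r : ℝ := Module.finrank ℝ E + 1
  have hdecay : (fun y : ℝ => exp (-c * y)) =o[atTop] fun y => y ^ (-r) :=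
    isLittleO_exp_neg_mul_rpow_atTop hc _
  have hnorm : Tendsto (fun x : E => 1 + ‖x‖) (cocompact E) atTop :=
    tendsto_atTop_add_const_left _ _ tendsto_norm_cocompact_atTop
  refine (Continuous.locallyIntegrable (by fun_prop)).integrable_of_isBigO_cocompact
    (g := fun x : E => (1 + ‖x‖) ^ (-r)) ?_
    ((integrable_one_add_norm (by simp [r])).integrableAtFilter _)
  calc (fun x : E => exp (-(c * ‖x‖))) = fun x => exp c * exp (-c * (1 + ‖x‖)) := by
        ext x; rw [← exp_add]; ring_nf
    _ =O[cocompact E] fun x => (1 + ‖x‖) ^ (-r) :=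
        ((hdecay.comp_tendsto hnorm).isBigO).const_mul_left _

theorem lt_sqrt_one_add_sq (r : ℝ) : r < √(1 + r ^ 2) :=
  Real.lt_sqrt_of_sq_lt (by linarith)

section LiftPairing

variable {E : Type*} [NormedAddCommGroup E] [InnerProductSpace ℝ E]

/-- The Minkowski pairing `[ũ, ṽ]` of the lifts of `u` and `v` to the upper unit hyperboloid. -/
noncomputable def liftPairing (u v : E) : ℝ :=
  √(1 + ‖u‖ ^ 2) * √(1 + ‖v‖ ^ 2) - inner ℝ u v

theorem liftPairing_self (u : E) : liftPairing u u = 1 := by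
  rw [liftPairing, Real.mul_self_sqrt (by positivity), real_inner_self_eq_norm_sq]
  ring

theorem norm_sub_sq_le_liftPairing (u v : E) :
    ‖u - v‖ ^ 2 ≤ 2 * (√(1 + ‖u‖ ^ 2) * √(1 + ‖v‖ ^ 2)) * (liftPairing u v - 1) := by
  have hc : (√(1 + ‖u‖ ^ 2) * √(1 + ‖v‖ ^ 2)) ^ 2 = (1 + ‖u‖ ^ 2) * (1 + ‖v‖ ^ 2) := by
    rw [mul_pow, sq_sqrt (by positivity), sq_sqrt (by positivity)]
  have hcs : inner ℝ u v ^ 2 ≤ (‖u‖ * ‖v‖) ^ 2 :=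
    sq_le_sq' (neg_le_of_abs_le (abs_real_inner_le_norm u v)) (real_inner_le_norm u v)
  rw [liftPairing, norm_sub_sq_real]
  -- with `c = √(1 + ‖u‖²) √(1 + ‖v‖²)`, the gap is `(c - 1 - ⟪u, v⟫)² + (‖u‖²‖v‖² - ⟪u, v⟫²)`
  nlinarith [sq_nonneg (√(1 + ‖u‖ ^ 2) * √(1 + ‖v‖ ^ 2) - 1 - inner ℝ u v)]

theorem one_lt_liftPairing {u v : E} (huv : u ≠ v) : 1 < liftPairing u v := by
  have hpos : 0 < ‖u - v‖ ^ 2 := by positivity [sub_ne_zero.2 huv]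
  have := (norm_sub_sq_le_liftPairing u v).trans_lt' hpos
  have : 0 < liftPairing u v - 1 := pos_of_mul_pos_right this (by positivity)
  linarith

theorem sub_norm_mul_norm_le_liftPairing (u v : E) :
    (√(1 + ‖u‖ ^ 2) - ‖u‖) * ‖v‖ ≤ liftPairing u v := by
  have := real_inner_le_norm u v
  have := (lt_sqrt_one_add_sq ‖v‖).le
  have := Real.sqrt_nonneg (1 + ‖u‖ ^ 2)
  rw [liftPairing]
  nlinarith

theorem continuous_liftPairing (u : E) : Continuous (liftPairing u) := by
  unfold liftPairing; fun_prop

theorem tendsto_liftPairing_cocompact [ProperSpace E] (u : E) :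
    Tendsto (liftPairing u) (cocompact E) atTop :=
  tendsto_atTop_mono (sub_norm_mul_norm_le_liftPairing u)
    (tendsto_norm_cocompact_atTop.const_mul_atTop (sub_pos.2 (lt_sqrt_one_add_sq ‖u‖)))

end LiftPairing

theorem mink_smul_left {d : ℕ} (t : ℝ) (θ y : Fin (d + 1) → ℝ) :
    mink (t • θ) y = t * mink θ y := by
  simp only [mink, Pi.smul_apply, smul_eq_mul, mul_sub, Finset.mul_sum, mul_assoc]

theorem mink_hypLift {d : ℕ} (θ : Fin (d + 1) → ℝ) (x : Fin d → ℝ) :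
    mink θ (hypLift x) = θ 0 * √(1 + ∑ i, x i ^ 2) - ∑ i, θ i.succ * x i := by
  simp [mink, hypLift]

theorem norm_toLp_sq_eq_sum {d : ℕ} (x : Fin d → ℝ) : ‖WithLp.toLp 2 x‖ ^ 2 = ∑ i, x i ^ 2 := by
  simp [EuclideanSpace.norm_sq_eq]

theorem inner_toLp_eq_sum {d : ℕ} (x y : Fin d → ℝ) :
    inner ℝ (WithLp.toLp 2 x) (WithLp.toLp 2 y) = ∑ i, x i * y i := by
  simp [PiLp.inner_apply, mul_comm]

theorem mink_hypLift_eq_liftPairing {d : ℕ} {θ : Fin (d + 1) → ℝ}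
    (hθ : θ 0 = √(1 + ∑ i : Fin d, θ i.succ ^ 2)) (x : Fin d → ℝ) :
    mink θ (hypLift x) = liftPairing (WithLp.toLp 2 fun i => θ i.succ) (WithLp.toLp 2 x) := by
  rw [mink_hypLift, liftPairing, norm_toLp_sq_eq_sum, norm_toLp_sq_eq_sum, inner_toLp_eq_sum, hθ]

theorem continuous_mink_hypLift {d : ℕ} (θ : Fin (d + 1) → ℝ) :
    Continuous fun x : Fin d → ℝ => mink θ (hypLift x) := by
  simp_rw [mink_hypLift]; fun_prop

/-- The invariant measure `dx / x̃₀` of the hyperboloid, read in the chart `x ↦ x̃`. -/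
noncomputable def hypBaseMeasure (d : ℕ) : Measure (Fin d → ℝ) :=
  volume.withDensity fun x => ENNReal.ofReal (√(1 + ∑ i, x i ^ 2))⁻¹

instance (d : ℕ) : SFinite (hypBaseMeasure d) := by
  unfold hypBaseMeasure; infer_instance

instance (d : ℕ) : (hypBaseMeasure d).IsOpenPosMeasure :=
  (withDensity_absolutelyContinuous' (Measurable.aemeasurable (by fun_prop))
    (ae_of_all _ fun x => (ENNReal.ofReal_pos.2 (by positivity)).ne')).isOpenPosMeasure

theorem integral_hypBaseMeasure {d : ℕ} (f : (Fin d → ℝ) → ℝ) :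
    ∫ x, f x ∂hypBaseMeasure d = ∫ x, f x / √(1 + ∑ i, x i ^ 2) := by
  rw [hypBaseMeasure, integral_withDensity_eq_integral_toReal_smul (by fun_prop)
    (ae_of_all _ fun _ => ENNReal.ofReal_lt_top)]
  congr 1 with x
  rw [ENNReal.toReal_ofReal (by positivity), smul_eq_mul, div_eq_inv_mul]

theorem hypMeasure_eq_tilted (d : ℕ) (θ : Fin (d + 1) → ℝ) :
    hypMeasure d θ = (hypBaseMeasure d).tilted fun x => -mink θ (hypLift x) := by
  have hmeas := (continuous_mink_hypLift θ).measurable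
  rw [hypMeasure, Measure.tilted, hypBaseMeasure, ← withDensity_mul _ (by fun_prop) (by fun_prop),
    ← hypBaseMeasure, integral_hypBaseMeasure]
  congr 1 with x
  rw [Pi.mul_apply, ← ENNReal.ofReal_mul (by positivity), hypDensity, hypZ]
  simp only [hypKernel]
  congr 1
  ring

section OnSheet

variable {d : ℕ} {θ : Fin (d + 1) → ℝ} (hθ : θ 0 = √(1 + ∑ i : Fin d, θ i.succ ^ 2))
include hθ

theorem mink_hypLift_lt {x : Fin d → ℝ} (hx : x ≠ fun i => θ i.succ) :
    mink θ (hypLift fun i => θ i.succ) < mink θ (hypLift x) := by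
  rw [mink_hypLift_eq_liftPairing hθ, mink_hypLift_eq_liftPairing hθ, liftPairing_self]
  exact one_lt_liftPairing fun h => hx (WithLp.toLp_injective 2 h).symm

theorem tendsto_mink_hypLift_cocompact :
    Tendsto (fun x : Fin d → ℝ => mink θ (hypLift x)) (cocompact _) atTop := by
  simp_rw [mink_hypLift_eq_liftPairing hθ]
  exact (tendsto_liftPairing_cocompact _).comp
    (EuclideanSpace.equiv (Fin d) ℝ).symm.toHomeomorph.isClosedEmbedding.tendsto_cocompact

theorem integrable_exp_neg_mink_hypLift :
    Integrable (fun x => exp (-mink θ (hypLift x))) (hypBaseMeasure d) := by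
  set u : EuclideanSpace ℝ (Fin d) := WithLp.toLp 2 fun i => θ i.succ
  have hκ : 0 < √(1 + ‖u‖ ^ 2) - ‖u‖ := sub_pos.2 (lt_sqrt_one_add_sq ‖u‖)
  rw [hypBaseMeasure, integrable_withDensity_iff_integrable_smul' (by fun_prop)
    (ae_of_all _ fun _ => ENNReal.ofReal_lt_top)]
  have hmeas := (continuous_mink_hypLift θ).measurable
  refine (integrable_exp_neg_mul_norm volume hκ).mono' (by fun_prop) (ae_of_all _ fun x => ?_)
  have hs : 1 ≤ √(1 + ∑ i, x i ^ 2) := Real.one_le_sqrt.2 (le_add_of_nonneg_right (by positivity))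
  have hx : ‖x‖ ≤ ‖WithLp.toLp 2 x‖ := (pi_norm_le_iff_of_nonneg (norm_nonneg _)).2 fun i =>
    PiLp.norm_apply_le (WithLp.toLp 2 x) i
  rw [ENNReal.toReal_ofReal (by positivity), smul_eq_mul, norm_mul, norm_inv,
    norm_of_nonneg (exp_pos _).le, norm_of_nonneg (by positivity), mink_hypLift_eq_liftPairing hθ]
  calc (√(1 + ∑ i, x i ^ 2))⁻¹ * exp (-liftPairing u (WithLp.toLp 2 x))
      ≤ 1 * exp (-((√(1 + ‖u‖ ^ 2) - ‖u‖) * ‖WithLp.toLp 2 x‖)) := by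
        gcongr
        · exact inv_le_one_of_one_le₀ hs
        · exact sub_norm_mul_norm_le_liftPairing u _
    _ ≤ exp (-((√(1 + ‖u‖ ^ 2) - ‖u‖) * ‖x‖)) := by
        rw [one_mul]; gcongr

end OnSheet

theorem hyperboloid_tendsto_dirac_general (d : ℕ) (θ : Fin (d + 1) → ℝ)
    (hθ : θ 0 = Real.sqrt (1 + ∑ i : Fin d, θ i.succ ^ 2)) :
    ∀ φ : BoundedContinuousFunction (Fin d → ℝ) ℝ,
      Filter.Tendsto (fun t : ℝ => ∫ x, φ x ∂hypMeasure d (t • θ)) Filter.atTop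
        (nhds (φ fun i => θ i.succ)) := by
  intro φ
  simp_rw [hypMeasure_eq_tilted, mink_smul_left]
  exact tendsto_integral_tilted_neg_mul (continuous_mink_hypLift θ)
    (tendsto_mink_hypLift_cocompact hθ) (fun x hx => mink_hypLift_lt hθ hx)
    (integrable_exp_neg_mink_hypLift hθ) φ

/-- if θ lies on the upper unit hyperboloid sheet
(θ₀ = √(1+θ₁²+⋯+θ_d²)), then P_{tθ} converges weakly to the Dirac mass at
(θ₁,…,θ_d) as t → +∞: the integral of every bounded continuous function converges. -/
theorem hyperboloid_tendsto_dirac (d : ℕ) (hd : 2 ≤ d) (θ : Fin (d + 1) → ℝ)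
    (hθ : θ 0 = Real.sqrt (1 + ∑ i : Fin d, θ i.succ ^ 2)) :
    ∀ φ : BoundedContinuousFunction (Fin d → ℝ) ℝ,
      Filter.Tendsto (fun t : ℝ => ∫ x, φ x ∂hypMeasure d (t • θ)) Filter.atTop
        (nhds (φ fun i => θ i.succ)) :=
  hyperboloid_tendsto_dirac_general d θ hθ
end
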